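/- Let o ∈ I, c > 0, and let f : I → I be a map such that f restricted to I ∩ [-1/2, o) is injective with |f(u) − f(v)| ≥ c|u − v| for all u, v ∈ I ∩ [-1/2, o), and f restricted to I ∩ (o, 1/2] is injective with |f(u) − f(v)| ≥ c|u − v| for all u, v ∈ I ∩ (o, 1/2]. Then for every Borel set J ⊆ ℝ and every integer m ≥ 0, the Lebesgue measure of I ∩ f^{-m}(J) is at most (2/c)^m · λ(J). -/

import Mathlib

/-!
On each branch the expansion `c * |u - v| ≤ |f u - f v|` makes `f` antilipschitz with constant
`c⁻¹`, and antilipschitz maps enlarge `μH[1] = λ` of preimages by at most that factor. So each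
branch contributes at most `c⁻¹ λ(S)` to `λ(I ∩ f⁻¹(S))`, and the split point `o` is null,
giving the factor `2 / c`. As `f` maps `I` into itself,
`I ∩ f^{-(m+1)}(J) = I ∩ f⁻¹(I ∩ f^{-m}(J))`, so the one-step bound iterates.
-/

open MeasureTheory Set Filter Topology
open scoped ENNReal

noncomputable section

/-- The interval `I = [-1/2, 1/2] ⊆ ℝ`. -/
def I01 : Set ℝ := Set.Icc (-(1 / 2)) (1 / 2)

open scoped NNReal

theorem AntilipschitzWith.hausdorffMeasure_inter_preimage_le {X Y : Type*}
    [EMetricSpace X] [MeasurableSpace X] [BorelSpace X]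
    [EMetricSpace Y] [MeasurableSpace Y] [BorelSpace Y]
    {f : X → Y} {B : Set X} {K : ℝ≥0} {d : ℝ} (hf : AntilipschitzWith K (B.domRestrict f))
    (hd : 0 ≤ d) (S : Set Y) :
    μH[d] (B ∩ f ⁻¹' S) ≤ (K : ℝ≥0∞) ^ d * μH[d] S := by
  rw [← Subtype.image_preimage_coe, ← preimage_comp,
    isometry_subtype_coe.hausdorffMeasure_image (.inl hd)]
  exact hf.hausdorffMeasure_preimage_le hd S

theorem antilipschitzWith_domRestrict_of_expanding {f : ℝ → ℝ} {B : Set ℝ} {c : ℝ} (hc : 0 < c)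
    (hexp : ∀ u ∈ B, ∀ v ∈ B, c * |u - v| ≤ |f u - f v|) :
    AntilipschitzWith (Real.toNNReal c⁻¹) (B.domRestrict f) := by
  refine AntilipschitzWith.of_le_mul_dist fun u v ↦ ?_
  rw [Real.coe_toNNReal _ (inv_nonneg.mpr hc.le), Subtype.dist_eq, Real.dist_eq, Real.dist_eq,
    inv_mul_eq_div, le_div_iff₀ hc, mul_comm]
  exact hexp u u.2 v v.2

theorem volume_inter_preimage_le_of_expanding {f : ℝ → ℝ} {B : Set ℝ} {c : ℝ} (hc : 0 < c)
    (hexp : ∀ u ∈ B, ∀ v ∈ B, c * |u - v| ≤ |f u - f v|) (S : Set ℝ) :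
    volume (B ∩ f ⁻¹' S) ≤ ENNReal.ofReal c⁻¹ * volume S := by
  have h := (antilipschitzWith_domRestrict_of_expanding hc hexp).hausdorffMeasure_inter_preimage_le
    zero_le_one S
  rwa [hausdorffMeasure_real, ENNReal.rpow_one] at h

theorem volume_inter_preimage_le_of_expanding_pieces {f : ℝ → ℝ} {A L R : Set ℝ} {c : ℝ}
    (hc : 0 < c) (hA : volume (A \ (L ∪ R)) = 0)
    (hexpL : ∀ u ∈ L, ∀ v ∈ L, c * |u - v| ≤ |f u - f v|)
    (hexpR : ∀ u ∈ R, ∀ v ∈ R, c * |u - v| ≤ |f u - f v|) (S : Set ℝ) :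
    volume (A ∩ f ⁻¹' S) ≤ ENNReal.ofReal (2 / c) * volume S := by
  have hcover : A ∩ f ⁻¹' S ⊆ (L ∩ f ⁻¹' S) ∪ (R ∩ f ⁻¹' S) ∪ A \ (L ∪ R) := by
    rintro x ⟨hxA, hxS⟩
    by_cases hx : x ∈ L ∪ R
    · rcases hx with hxL | hxR
      exacts [Or.inl (Or.inl ⟨hxL, hxS⟩), Or.inl (Or.inr ⟨hxR, hxS⟩)]
    · exact Or.inr ⟨hxA, hx⟩
  calc volume (A ∩ f ⁻¹' S)
      ≤ volume (L ∩ f ⁻¹' S) + volume (R ∩ f ⁻¹' S) + volume (A \ (L ∪ R)) :=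
        (measure_mono hcover).trans <|
          (measure_union_le _ _).trans (add_le_add_left (measure_union_le _ _) _)
    _ ≤ ENNReal.ofReal c⁻¹ * volume S + ENNReal.ofReal c⁻¹ * volume S + 0 := by
        gcongr
        exacts [volume_inter_preimage_le_of_expanding hc hexpL S,
          volume_inter_preimage_le_of_expanding hc hexpR S, hA.le]
    _ = ENNReal.ofReal (2 / c) * volume S := by
        rw [add_zero, ← two_mul, ← mul_assoc, ← ENNReal.ofReal_ofNat 2,
          ← ENNReal.ofReal_mul zero_le_two, div_eq_mul_inv]

theorem measure_inter_preimage_iterate_le {α : Type*} [MeasurableSpace α] {μ : Measure α}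
    {A : Set α} {f : α → α} {K : ℝ≥0∞} (hmaps : MapsTo f A A)
    (hf : ∀ S, μ (A ∩ f ⁻¹' S) ≤ K * μ S) (S : Set α) (m : ℕ) :
    μ (A ∩ f^[m] ⁻¹' S) ≤ K ^ m * μ S := by
  induction m with
  | zero => simpa using measure_mono inter_subset_right
  | succ m ih =>
    have hstep : A ∩ f^[m + 1] ⁻¹' S = A ∩ f ⁻¹' (A ∩ f^[m] ⁻¹' S) := by
      ext x
      simp only [mem_inter_iff, mem_preimage, Function.iterate_succ_apply]
      exact ⟨fun h ↦ ⟨h.1, hmaps h.1, h.2⟩, fun h ↦ ⟨h.1, h.2.2⟩⟩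
    calc μ (A ∩ f^[m + 1] ⁻¹' S) ≤ K * μ (A ∩ f^[m] ⁻¹' S) := hstep ▸ hf _
      _ ≤ K * (K ^ m * μ S) := by gcongr
      _ = K ^ (m + 1) * μ S := by rw [← mul_assoc, pow_succ']

theorem measure_preimage_iterate_le_general
    (o c : ℝ) (hc : 0 < c)
    (f : ℝ → ℝ) (hmaps : Set.MapsTo f I01 I01)
    (hexpL : ∀ u ∈ I01 ∩ Set.Ico (-(1 / 2)) o, ∀ v ∈ I01 ∩ Set.Ico (-(1 / 2)) o,
      c * |u - v| ≤ |f u - f v|)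
    (hexpR : ∀ u ∈ I01 ∩ Set.Ioc o (1 / 2), ∀ v ∈ I01 ∩ Set.Ioc o (1 / 2),
      c * |u - v| ≤ |f u - f v|) :
    ∀ J : Set ℝ, MeasurableSet J → ∀ m : ℕ,
      volume (I01 ∩ f^[m] ⁻¹' J) ≤ ENNReal.ofReal ((2 / c) ^ m) * volume J := by
  intro J _ m
  have hnull : volume (I01 \ (I01 ∩ Ico (-(1 / 2)) o ∪ I01 ∩ Ioc o (1 / 2))) = 0 := by
    refine measure_mono_null ?_ (measure_singleton o)
    rintro x ⟨hxI, hx⟩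
    obtain ⟨hlo, hhi⟩ := id hxI
    by_contra hxo
    rcases lt_or_gt_of_ne hxo with h | h
    exacts [hx (Or.inl ⟨hxI, hlo, h⟩), hx (Or.inr ⟨hxI, h, hhi⟩)]
  rw [ENNReal.ofReal_pow (by positivity)]
  exact measure_inter_preimage_iterate_le hmaps
    (volume_inter_preimage_le_of_expanding_pieces hc hnull hexpL hexpR) J m

/-- If `f : I → I` is injective and `c`-expanding on each of the two branches
`I ∩ [-1/2, o)` and `I ∩ (o, 1/2]`, then for every Borel set `J` and every `m ≥ 0` the Lebesgue
measure of `I ∩ f^{-m}(J)` is at most `(2/c)^m · λ(J)`. -/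
theorem measure_preimage_iterate_le
    (o c : ℝ) (ho : o ∈ I01) (hc : 0 < c)
    (f : ℝ → ℝ) (hmaps : Set.MapsTo f I01 I01)
    (hinjL : Set.InjOn f (I01 ∩ Set.Ico (-(1 / 2)) o))
    (hexpL : ∀ u ∈ I01 ∩ Set.Ico (-(1 / 2)) o, ∀ v ∈ I01 ∩ Set.Ico (-(1 / 2)) o,
      c * |u - v| ≤ |f u - f v|)
    (hinjR : Set.InjOn f (I01 ∩ Set.Ioc o (1 / 2)))
    (hexpR : ∀ u ∈ I01 ∩ Set.Ioc o (1 / 2), ∀ v ∈ I01 ∩ Set.Ioc o (1 / 2),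
      c * |u - v| ≤ |f u - f v|) :
    ∀ J : Set ℝ, MeasurableSet J → ∀ m : ℕ,
      volume (I01 ∩ f^[m] ⁻¹' J) ≤ ENNReal.ofReal ((2 / c) ^ m) * volume J :=
  measure_preimage_iterate_le_general o c hc f hmaps hexpL hexpR
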